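/- Let G = (V, E) be a graph that admits a nice tree decomposition of width τ with N nodes. Then there exist a polytope P = {x ∈ ℝ^m : Ax ≤ b, Cx = d}, where m and the total number of rows of A and C are at most c·2^(τ+1)·N for an absolute constant c, and a linear map π : ℝ^m → ℝ^E, such that π(P) equals the cut polytope of G, i.e., the convex hull of the cut vectors δ(S) ∈ {0,1}^E over all S ⊆ V, where (δ(S))_{uv} = 1 iff exactly one of u, v belongs to S. -/

import Mathlib

/-! Common definitions: CSP instances, configurations, nice tree decompositions,
and the polytopes from Kolman–Koutecký. -/

/-- A constraint with scope `scope`; its satisfaction depends only on the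
coordinates in the scope (it is a relation on the domains of the scope). -/
structure CSPConstraint (n : ℕ) where
  scope : Finset (Fin n)
  sat : (Fin n → ℝ) → Prop
  sat_congr : ∀ z z' : Fin n → ℝ, (∀ v ∈ scope, z v = z' v) → sat z → sat z'

/-- A CSP instance: finite real domains, hard constraints and soft constraints. -/
structure CSPInstance (n : ℕ) where
  dom : Fin n → Finset ℝ
  hard : List (CSPConstraint n)
  soft : List (CSPConstraint n)

variable {n : ℕ}

/-- The list of all constraints (hard and soft). -/
def consList (Q : CSPInstance n) : List (CSPConstraint n) := Q.hard ++ Q.soft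

/-- A feasible assignment: values in the domains, satisfying all hard constraints. -/
def Feasible (Q : CSPInstance n) (z : Fin n → ℝ) : Prop :=
  (∀ v, z v ∈ Q.dom v) ∧ ∀ C ∈ Q.hard, C.sat z

-- Configurations of a set `W` of variables: partial assignments (with `none`
-- playing the role of the symbol `λ`) defined exactly on `W`.
open Classical in
noncomputable def configs (Q : CSPInstance n) (W : Finset (Fin n)) :
    Finset (Fin n → Option ℝ) :=
  (Fintype.piFinset fun v =>
      if v ∈ W then (Q.dom v).image some else ({none} : Finset (Option ℝ))).filter
    (fun K => ∀ C ∈ Q.hard, C.scope ⊆ W → C.sat (fun v => (K v).getD 0))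

/-- Restriction `K↾_W` of a configuration: coordinates outside `W` are set to `λ`. -/
def restrictCfg (K : Fin n → Option ℝ) (W : Finset (Fin n)) : Fin n → Option ℝ :=
  fun v => if v ∈ W then K v else none

/-- A (rooted) nice tree: leaves, introduce nodes, forget nodes and join nodes. -/
inductive NiceTree (n : ℕ) : Type
  | leaf (v : Fin n) : NiceTree n
  | introduce (v : Fin n) (t : NiceTree n) : NiceTree n
  | forget (v : Fin n) (t : NiceTree n) : NiceTree n
  | join (t₁ t₂ : NiceTree n) : NiceTree n

namespace NiceTree

/-- The bag of the root node of a nice tree. -/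
def bag : NiceTree n → Finset (Fin n)
  | leaf v => {v}
  | introduce v t => insert v (bag t)
  | forget v t => (bag t).erase v
  | join t₁ _ => bag t₁

/-- All vertices appearing in bags of the tree. -/
def verts : NiceTree n → Finset (Fin n)
  | leaf v => {v}
  | introduce v t => insert v (verts t)
  | forget _ t => verts t
  | join t₁ t₂ => verts t₁ ∪ verts t₂

/-- Number of nodes of the tree. -/
def size : NiceTree n → ℕ
  | leaf _ => 1
  | introduce _ t => size t + 1
  | forget _ t => size t + 1
  | join t₁ t₂ => size t₁ + size t₂ + 1

/-- Structural validity of a nice tree (in particular, the connectivity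
condition of tree decompositions: an introduced vertex does not occur below,
and vertices shared by the two subtrees of a join lie in its bag). -/
def valid : NiceTree n → Prop
  | leaf _ => True
  | introduce v t => v ∉ verts t ∧ valid t
  | forget v t => v ∈ bag t ∧ valid t
  | join t₁ t₂ => bag t₁ = bag t₂ ∧ verts t₁ ∩ verts t₂ ⊆ bag t₁ ∧ valid t₁ ∧ valid t₂

/-- `isSubtree s t`: `s` is a node (subtree) of `t`. -/
def isSubtree (s : NiceTree n) : NiceTree n → Prop
  | leaf v => s = leaf v
  | introduce v t => s = introduce v t ∨ isSubtree s t
  | forget v t => s = forget v t ∨ isSubtree s t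
  | join t₁ t₂ => s = join t₁ t₂ ∨ isSubtree s t₁ ∨ isSubtree s t₂

-- The configurations relevant to the subtree: `ℛ(a) = ⋃_{b ∈ T(a)} 𝒦(B(b))`.
open Classical in
noncomputable def relConfigs (Q : CSPInstance n) : NiceTree n → Finset (Fin n → Option ℝ)
  | leaf v => configs Q {v}
  | introduce v t => configs Q (insert v (bag t)) ∪ relConfigs Q t
  | forget v t => configs Q ((bag t).erase v) ∪ relConfigs Q t
  | join t₁ t₂ => relConfigs Q t₁ ∪ relConfigs Q t₂

end NiceTree

/-- A valid nice tree decomposition for the CSP instance `Q`: every variable is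
in some bag and every constraint scope is contained in some bag. -/
def IsNiceTreeDecompCSP (Q : CSPInstance n) (T : NiceTree n) : Prop :=
  T.valid ∧ (∀ v : Fin n, v ∈ T.verts) ∧
    ∀ C ∈ consList Q, ∃ s : NiceTree n, s.isSubtree T ∧ C.scope ⊆ s.bag

/-- A valid nice tree decomposition of a graph `G`: every vertex is in some bag
and both endpoints of every edge lie in a common bag. -/
def IsNiceTreeDecompGraph (G : SimpleGraph (Fin n)) (T : NiceTree n) : Prop :=
  T.valid ∧ (∀ v : Fin n, v ∈ T.verts) ∧
    ∀ u v : Fin n, G.Adj u v → ∃ s : NiceTree n, s.isSubtree T ∧ u ∈ s.bag ∧ v ∈ s.bag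

/-- The constraint graph of a CSP instance. -/
def constraintGraph (Q : CSPInstance n) : SimpleGraph (Fin n) where
  Adj u v := u ≠ v ∧ ∃ C ∈ consList Q, u ∈ C.scope ∧ v ∈ C.scope
  symm := by
    constructor
    rintro u v ⟨hne, C, hC, hu, hv⟩
    exact ⟨hne.symm, C, hC, hv, hu⟩
  loopless := by
    constructor
    rintro v ⟨hne, -⟩
    exact hne rfl

-- The LP constraints of `P(Q)` relevant to the subtree `t`: bag equations and
-- consistency equations at introduce and forget nodes of `t`.
def RelCons (Q : CSPInstance n) (f : (Fin n → Option ℝ) → ℝ) : NiceTree n → Prop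
  | .leaf v => ∑ K ∈ configs Q {v}, f K = 1
  | .introduce v t =>
      RelCons Q f t ∧ (∑ K ∈ configs Q (insert v t.bag), f K = 1) ∧
      ∀ K ∈ configs Q t.bag,
        ∑ K' ∈ (configs Q (insert v t.bag)).filter
            (fun K' => restrictCfg K' t.bag = K), f K' = f K
  | .forget v t =>
      RelCons Q f t ∧ (∑ K ∈ configs Q (t.bag.erase v), f K = 1) ∧
      ∀ K ∈ configs Q (t.bag.erase v),
        ∑ K' ∈ (configs Q t.bag).filter
            (fun K' => restrictCfg K' (t.bag.erase v) = K), f K' = f K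
  | .join t₁ t₂ => RelCons Q f t₁ ∧ RelCons Q f t₂

/-- All the constraints of `P(Q)` relevant to the subtree `t`, including the
bounds `0 ≤ f(K) ≤ 1` for relevant configurations. -/
def RelevantLP (Q : CSPInstance n) (t : NiceTree n) (f : (Fin n → Option ℝ) → ℝ) : Prop :=
  RelCons Q f t ∧ ∀ K ∈ t.relConfigs Q, 0 ≤ f K ∧ f K ≤ 1

/-- The polytope `P(Q) ⊆ ℝ^{𝒦_ℬ}` (coordinates outside `𝒦_ℬ` are zero). -/
def Ppoly (Q : CSPInstance n) (T : NiceTree n) : Set ((Fin n → Option ℝ) → ℝ) :=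
  {f | RelevantLP Q T f ∧ ∀ K, K ∉ T.relConfigs Q → f K = 0}

/-- Extended feasible assignments `(z, h)`. -/
def ExtAssignments (Q : CSPInstance n) :
    Set ((Fin n → ℝ) × (Fin Q.soft.length → ℝ)) :=
  {p | Feasible Q p.1 ∧ ∀ i : Fin Q.soft.length,
      ((Q.soft.get i).sat p.1 ∧ p.2 i = 1) ∨ (¬ (Q.soft.get i).sat p.1 ∧ p.2 i = 0)}

/-- `CSP(Q)`: the convex hull of all extended feasible assignments. -/
def CSPpolytope (Q : CSPInstance n) : Set ((Fin n → ℝ) × (Fin Q.soft.length → ℝ)) :=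
  convexHull ℝ (ExtAssignments Q)

/-- `CSP'(Q)`: the convex hull of all feasible assignments. -/
def CSPpolytope' (Q : CSPInstance n) : Set (Fin n → ℝ) :=
  convexHull ℝ {z | Feasible Q z}

/-- The `y`-variables of the basic LP: one for each `v ∈ V` and `i ∈ D_v`. -/
abbrev YType (Q : CSPInstance n) := (v : Fin n) → {i : ℝ // i ∈ Q.dom v} → ℝ

/-- The `g`-variables of the basic LP: one for each constraint `C_U ∈ 𝒞 ∪ ℋ`
and each configuration `K ∈ 𝒦(U)`. -/
abbrev GType (Q : CSPInstance n) :=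
  (c : Fin (consList Q).length) →
    {K : Fin n → Option ℝ // K ∈ configs Q ((consList Q).get c).scope} → ℝ

/-- The basic LP (1)–(3). -/
def BasicLP (Q : CSPInstance n) (p : YType Q × GType Q) : Prop :=
  (∀ v : Fin n, ∑ i ∈ (Q.dom v).attach, p.1 v i = 1) ∧
  (∀ c : Fin (consList Q).length, ∀ v ∈ ((consList Q).get c).scope,
    ∀ (i : ℝ) (hi : i ∈ Q.dom v),
      ∑ K ∈ (configs Q ((consList Q).get c).scope).attach.filter
          (fun K => K.1 v = some i), p.2 c K = p.1 v ⟨i, hi⟩) ∧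
  (∀ v i, 0 ≤ p.1 v i ∧ p.1 v i ≤ 1) ∧ (∀ c K, 0 ≤ p.2 c K ∧ p.2 c K ≤ 1)

/-- Integrality (all coordinates in `{0,1}`) of a `(y, g)` vector. -/
def IntegralYG (Q : CSPInstance n) (p : YType Q × GType Q) : Prop :=
  (∀ v i, p.1 v i = 0 ∨ p.1 v i = 1) ∧ ∀ c K, p.2 c K = 0 ∨ p.2 c K = 1

-- The map sending a (feasible) assignment `z` to the `(y, g)` vector of the basic LP.
open Classical in
noncomputable def exMap (Q : CSPInstance n) (z : Fin n → ℝ) : YType Q × GType Q :=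
  (fun v i => if z v = i.1 then 1 else 0,
   fun c K => if ∀ u ∈ ((consList Q).get c).scope, K.1 u = some (z u) then 1 else 0)

/-!
A cut `S` is encoded locally: at every node `s` of the tree decomposition only `S ∩ B(s)` is
recorded, one coordinate per pair `(s, K)` with `K ⊆ B(s)`, so there are at most
`2^(τ+1)·N` coordinates. The linear constraints say that the weight vectors of adjacent bags
have equal marginals on the intersection of the two bags, and that the weights at the root sum
to one. Every point of this polytope is a convex combination of encoded cuts: by induction
over the tree, a distribution on subsets of the vertices seen so far with the prescribed bag
marginals is obtained by gluing the distributions of the subtrees conditionally independently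
given the separating bag, which works because the two subtrees only share vertices of that
bag. Projecting each edge `uv` to the weight of the sets `K` separating `u` and `v` in a bag
containing both gives the cut polytope.
-/

open Finset

section Marginal

variable {α : Type*} [DecidableEq α]

theorem Finset.sum_powerset_eq_sum_union_sdiff {M : Type*} [AddCommMonoid M] {U W : Finset α}
    (h : W ⊆ U) (φ : Finset α → M) :
    ∑ S ∈ U.powerset, φ S = ∑ K ∈ W.powerset, ∑ T ∈ (U \ W).powerset, φ (K ∪ T) := by
  rw [← sum_product']
  refine sum_nbij' (fun S => (S ∩ W, S \ W)) (fun p => p.1 ∪ p.2) ?_ ?_ ?_ ?_ ?_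
  · intro S hS
    simp only [mem_product, mem_powerset] at hS ⊢
    grind
  · rintro ⟨K, T⟩ hKT
    simp only [mem_product, mem_powerset] at hKT ⊢
    grind
  · intro S _
    exact sup_inf_sdiff S W
  · rintro ⟨K, T⟩ hKT
    simp only [mem_product, mem_powerset, Prod.mk.injEq] at hKT ⊢
    grind
  · intro S _
    exact congrArg φ (sup_inf_sdiff S W).symm

noncomputable def marginal (U W : Finset α) (w : Finset α → ℝ) (K : Finset α) : ℝ :=
  ∑ S ∈ U.powerset with S ∩ W = K, w S

theorem marginal_eq_sum_union {U W K : Finset α} (hK : K ⊆ W) (hW : W ⊆ U)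
    (w : Finset α → ℝ) : marginal U W w K = ∑ T ∈ (U \ W).powerset, w (K ∪ T) := by
  rw [marginal, sum_filter, sum_powerset_eq_sum_union_sdiff hW]
  have hunion : ∀ K' ⊆ W, ∀ T ∈ (U \ W).powerset, (K' ∪ T) ∩ W = K' := fun K' hK' T hT => by
    rw [mem_powerset] at hT
    grind
  rw [sum_eq_single_of_mem K (mem_powerset.2 hK)]
  · exact sum_congr rfl fun T hT => if_pos (hunion K hK T hT)
  · intro K' hK' hne
    exact sum_eq_zero fun T hT => if_neg (by rw [hunion K' (mem_powerset.1 hK') T hT]; exact hne)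

theorem marginal_self {U K : Finset α} (hK : K ⊆ U) (w : Finset α → ℝ) :
    marginal U U w K = w K := by
  simp [marginal_eq_sum_union hK subset_rfl]

theorem sum_marginal (U W : Finset α) (w : Finset α → ℝ) :
    ∑ K ∈ W.powerset, marginal U W w K = ∑ S ∈ U.powerset, w S :=
  sum_fiberwise_of_maps_to (fun _ _ => mem_powerset.2 inter_subset_right) w

theorem marginal_marginal {U W W' : Finset α} (h : W' ⊆ W) (w : Finset α → ℝ) :
    marginal W W' (marginal U W w) = marginal U W' w := by
  funext K
  have hinter : ∀ S : Finset α, S ∩ W ∩ W' = S ∩ W' := fun S => by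
    rw [inter_assoc, inter_eq_right.2 h]
  change ∑ K' ∈ W.powerset with K' ∩ W' = K, marginal U W w K' =
    ∑ S ∈ U.powerset with S ∩ W' = K, w S
  rw [← sum_fiberwise_of_maps_to (s := {S ∈ U.powerset | S ∩ W' = K}) (g := (· ∩ W))
    (t := {K' ∈ W.powerset | K' ∩ W' = K}) (fun S hS => by
      simp only [mem_filter, mem_powerset] at hS ⊢
      exact ⟨inter_subset_right, by rw [hinter, hS.2]⟩)]
  refine sum_congr rfl fun K' hK' => ?_
  rw [marginal, filter_filter]
  refine sum_congr (filter_congr fun S _ => ?_) fun _ _ => rfl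
  rw [← (mem_filter.1 hK').2]
  constructor
  · rintro rfl
    exact ⟨by rw [hinter], rfl⟩
  · exact And.right

theorem marginal_congr {U W : Finset α} {w w' : Finset α → ℝ} (h : ∀ S ⊆ U, w S = w' S) :
    marginal U W w = marginal U W w' :=
  funext fun _ => sum_congr rfl fun S hS => h S (mem_powerset.1 (mem_filter.1 hS).1)

theorem marginal_nonneg {U W : Finset α} {w : Finset α → ℝ} (h : ∀ S ⊆ U, 0 ≤ w S)
    (K : Finset α) : 0 ≤ marginal U W w K :=
  sum_nonneg fun S hS => h S (mem_powerset.1 (mem_filter.1 hS).1)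

theorem le_marginal {U W S : Finset α} {w : Finset α → ℝ} (h : ∀ S ⊆ U, 0 ≤ w S)
    (hS : S ⊆ U) : w S ≤ marginal U W w (S ∩ W) :=
  single_le_sum (fun S' hS' => h S' (mem_powerset.1 (mem_filter.1 hS').1))
    (mem_filter.2 ⟨mem_powerset.2 hS, rfl⟩)

theorem marginal_indicator {U W S : Finset α} (hS : S ⊆ U) (K : Finset α) :
    marginal U W (fun S' => if S = S' then 1 else 0) K = if S ∩ W = K then 1 else 0 := by
  rw [marginal, sum_ite_eq]
  simp [hS]

variable {U₁ U₂ : Finset α} {w₁ w₂ : Finset α → ℝ}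

def MarginalsAgree (U₁ U₂ : Finset α) (w₁ w₂ : Finset α → ℝ) : Prop :=
  ∀ K ⊆ U₁ ∩ U₂, marginal U₁ (U₁ ∩ U₂) w₁ K = marginal U₂ (U₁ ∩ U₂) w₂ K

theorem MarginalsAgree.symm (h : MarginalsAgree U₁ U₂ w₁ w₂) : MarginalsAgree U₂ U₁ w₂ w₁ := by
  intro K hK
  rw [inter_comm] at hK ⊢
  exact (h K hK).symm

theorem MarginalsAgree.marginal_eq_of_subset (h : MarginalsAgree U₁ U₂ w₁ w₂) (hU : U₂ ⊆ U₁)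
    {K : Finset α} (hK : K ⊆ U₂) : marginal U₁ U₂ w₁ K = w₂ K := by
  have hK' := h K (by rwa [inter_eq_right.2 hU])
  rwa [inter_eq_right.2 hU, marginal_self hK] at hK'

/-- The coupling of `w₁` and `w₂` under which the parts in `U₁` and in `U₂` are conditionally
independent given the part in `U₁ ∩ U₂`. Where the common marginal vanishes the division by
zero returns `0`, which is also the value of `w₁` there. -/
noncomputable def glue (U₁ U₂ : Finset α) (w₁ w₂ : Finset α → ℝ) (S : Finset α) : ℝ :=
  w₁ (S ∩ U₁) * w₂ (S ∩ U₂) / marginal U₁ (U₁ ∩ U₂) w₁ (S ∩ (U₁ ∩ U₂))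

theorem glue_comm (h : MarginalsAgree U₁ U₂ w₁ w₂) : glue U₂ U₁ w₂ w₁ = glue U₁ U₂ w₁ w₂ := by
  funext S
  rw [glue, glue, inter_comm U₂ U₁, mul_comm, h _ inter_subset_right]

theorem glue_nonneg (h₁ : ∀ S ⊆ U₁, 0 ≤ w₁ S) (h₂ : ∀ S ⊆ U₂, 0 ≤ w₂ S) (S : Finset α) :
    0 ≤ glue U₁ U₂ w₁ w₂ S :=
  div_nonneg (mul_nonneg (h₁ _ inter_subset_right) (h₂ _ inter_subset_right))
    (marginal_nonneg h₁ _)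

theorem sum_glue_union (h₁ : ∀ S ⊆ U₁, 0 ≤ w₁ S) (h : MarginalsAgree U₁ U₂ w₁ w₂)
    {S : Finset α} (hS : S ⊆ U₁) :
    ∑ T ∈ (U₂ \ U₁).powerset, glue U₁ U₂ w₁ w₂ (S ∪ T) = w₁ S := by
  set B := U₁ ∩ U₂
  have hglue : ∀ T ∈ (U₂ \ U₁).powerset,
      glue U₁ U₂ w₁ w₂ (S ∪ T) = w₁ S * w₂ (S ∩ B ∪ T) / marginal U₁ B w₁ (S ∩ B) := by
    intro T hT
    rw [mem_powerset] at hT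
    rw [glue, show (S ∪ T) ∩ U₁ = S by grind, show (S ∪ T) ∩ U₂ = S ∩ B ∪ T by grind,
      show (S ∪ T) ∩ B = S ∩ B by grind]
  have hfibre : ∑ T ∈ (U₂ \ U₁).powerset, w₂ (S ∩ B ∪ T) = marginal U₁ B w₁ (S ∩ B) := by
    rw [h _ inter_subset_right, marginal_eq_sum_union inter_subset_right inter_subset_right,
      sdiff_inter_self_right]
  rw [sum_congr rfl hglue, ← sum_div, ← mul_sum, hfibre, mul_div_assoc]
  rcases eq_or_ne (marginal U₁ B w₁ (S ∩ B)) 0 with h0 | h0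
  · have hS0 : w₁ S = 0 := le_antisymm (h0 ▸ le_marginal h₁ hS) (h₁ S hS)
    simp [hS0]
  · rw [div_self h0, mul_one]

theorem marginal_glue_left (h₁ : ∀ S ⊆ U₁, 0 ≤ w₁ S) (h : MarginalsAgree U₁ U₂ w₁ w₂)
    {W : Finset α} (hW : W ⊆ U₁) :
    marginal (U₁ ∪ U₂) W (glue U₁ U₂ w₁ w₂) = marginal U₁ W w₁ := by
  funext K
  rw [marginal, sum_filter, sum_powerset_eq_sum_union_sdiff subset_union_left, union_sdiff_left,
    marginal, sum_filter]
  refine sum_congr rfl fun S hS => ?_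
  rw [mem_powerset] at hS
  have hinter : ∀ T ∈ (U₂ \ U₁).powerset, (S ∪ T) ∩ W = S ∩ W := fun T hT => by
    rw [mem_powerset] at hT
    grind
  rw [sum_congr rfl fun T hT => by rw [hinter T hT]]
  split_ifs
  · exact sum_glue_union h₁ h hS
  · exact sum_const_zero

theorem marginal_glue_right (h₂ : ∀ S ⊆ U₂, 0 ≤ w₂ S) (h : MarginalsAgree U₁ U₂ w₁ w₂)
    {W : Finset α} (hW : W ⊆ U₂) :
    marginal (U₁ ∪ U₂) W (glue U₁ U₂ w₁ w₂) = marginal U₂ W w₂ := by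
  rw [← glue_comm h, union_comm]
  exact marginal_glue_left h₂ h.symm hW

end Marginal

section Cut

variable {α : Type*} [DecidableEq α]

noncomputable def cutIndicator (S : Finset α) : Sym2 α → ℝ :=
  Sym2.lift ⟨fun u v => if (u ∈ S ∧ v ∉ S) ∨ (v ∈ S ∧ u ∉ S) then 1 else 0, fun u v => by
    simp only [or_comm]⟩

theorem cutIndicator_inter {S W : Finset α} {e : Sym2 α} (h : ∀ u ∈ e, u ∈ W) :
    cutIndicator (S ∩ W) e = cutIndicator S e := by
  induction e using Sym2.ind with
  | _ u v => simp [cutIndicator, h u (Sym2.mem_mk_left u v), h v (Sym2.mem_mk_right u v)]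

theorem setOf_cut_eq_range (G : SimpleGraph α) :
    {x : G.edgeSet → ℝ | ∃ S : Finset α, ∀ (u v : α) (h : G.Adj u v),
      x ⟨s(u, v), G.mem_edgeSet.mpr h⟩ = if (u ∈ S ∧ v ∉ S) ∨ (v ∈ S ∧ u ∉ S) then 1 else 0} =
      Set.range fun S (e : G.edgeSet) => cutIndicator S e.1 := by
  ext x
  constructor
  · rintro ⟨S, hS⟩
    refine ⟨S, funext fun ⟨e, he⟩ => ?_⟩
    induction e using Sym2.ind with
    | _ u v => exact (hS u v he).symm
  · rintro ⟨S, rfl⟩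
    exact ⟨S, fun u v _ => Sym2.lift_mk _ u v⟩

end Cut

section Polyhedron

variable {R ι κ₁ κ₂ E : Type*} [CommSemiring R] [LE R] [Fintype ι] [Fintype κ₁] [Fintype κ₂]
  [AddCommMonoid E] [Module R E]

theorem exists_fin_polyhedron_image_eq (L₁ : (ι → R) →ₗ[R] κ₁ → R) (b : κ₁ → R)
    (L₂ : (ι → R) →ₗ[R] κ₂ → R) (d : κ₂ → R) (π : (ι → R) →ₗ[R] E) :
    ∃ (A : Matrix (Fin (Fintype.card κ₁)) (Fin (Fintype.card ι)) R)
      (b' : Fin (Fintype.card κ₁) → R)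
      (C : Matrix (Fin (Fintype.card κ₂)) (Fin (Fintype.card ι)) R)
      (d' : Fin (Fintype.card κ₂) → R) (π' : (Fin (Fintype.card ι) → R) →ₗ[R] E),
      π' '' {x | A.mulVec x ≤ b' ∧ C.mulVec x = d'} = π '' {y | L₁ y ≤ b ∧ L₂ y = d} := by
  classical
  set eι := Fintype.equivFin ι
  set e₁ := Fintype.equivFin κ₁
  set e₂ := Fintype.equivFin κ₂
  set Φ : (Fin (Fintype.card ι) → R) ≃ₗ[R] ι → R := LinearEquiv.funCongrLeft R R eι
  refine ⟨(LinearMap.toMatrix' L₁).submatrix e₁.symm eι.symm, b ∘ e₁.symm,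
    (LinearMap.toMatrix' L₂).submatrix e₂.symm eι.symm, d ∘ e₂.symm, π ∘ₗ Φ.toLinearMap, ?_⟩
  have hfeas : {x | ((LinearMap.toMatrix' L₁).submatrix e₁.symm eι.symm).mulVec x ≤ b ∘ e₁.symm ∧
      ((LinearMap.toMatrix' L₂).submatrix e₂.symm eι.symm).mulVec x = d ∘ e₂.symm} =
      Φ ⁻¹' {y | L₁ y ≤ b ∧ L₂ y = d} := by
    have hΦ : ∀ x, Φ x = x ∘ eι := fun _ => rfl
    ext x
    simp only [Set.mem_ofPred_eq, Set.mem_preimage, hΦ, Matrix.submatrix_mulVec_equiv,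
      LinearMap.toMatrix'_mulVec, Equiv.symm_symm]
    exact and_congr ⟨fun h k => by simpa using h (e₁ k), fun h i => h _⟩
      e₂.symm.surjective.injective_comp_right.eq_iff
  rw [hfeas, LinearMap.coe_comp, Set.image_comp, LinearEquiv.coe_toLinearMap,
    Set.image_preimage_eq _ Φ.surjective]

end Polyhedron

theorem Finset.card_sigma_powerset_le {β γ : Type*} (A : Finset β) (B : β → Finset γ) {k : ℕ}
    (h : ∀ a ∈ A, (B a).card ≤ k) : (A.sigma fun a => (B a).powerset).card ≤ A.card * 2 ^ k := by
  rw [card_sigma, ← smul_eq_mul, ← sum_const]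
  exact sum_le_sum fun a ha => by
    rw [card_powerset]
    exact Nat.pow_le_pow_right two_pos (h a ha)

deriving instance DecidableEq for NiceTree

namespace NiceTree

def nodes : NiceTree n → Finset (NiceTree n)
  | leaf v => {leaf v}
  | introduce v t => insert (introduce v t) t.nodes
  | forget v t => insert (forget v t) t.nodes
  | join t₁ t₂ => insert (join t₁ t₂) (t₁.nodes ∪ t₂.nodes)

def edges : NiceTree n → Finset (NiceTree n × NiceTree n)
  | leaf _ => ∅
  | introduce v t => insert (introduce v t, t) t.edges
  | forget v t => insert (forget v t, t) t.edges
  | join t₁ t₂ => insert (join t₁ t₂, t₁) (insert (join t₁ t₂, t₂) (t₁.edges ∪ t₂.edges))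

theorem mem_nodes_iff_isSubtree {s t : NiceTree n} : s ∈ t.nodes ↔ s.isSubtree t := by
  induction t with
  | leaf v => simp [nodes, isSubtree]
  | introduce v t ih => simp [nodes, isSubtree, ih]
  | forget v t ih => simp [nodes, isSubtree, ih]
  | join t₁ t₂ ih₁ ih₂ => simp [nodes, isSubtree, ih₁, ih₂]

theorem self_mem_nodes (t : NiceTree n) : t ∈ t.nodes := by
  cases t <;> simp [nodes]

theorem bag_subset_verts (t : NiceTree n) : t.bag ⊆ t.verts := by
  induction t with
  | leaf v => exact subset_rfl
  | introduce v t ih => exact insert_subset_insert v ih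
  | forget v t ih => exact (erase_subset v _).trans ih
  | join t₁ t₂ ih₁ ih₂ => exact ih₁.trans subset_union_left

theorem bag_subset_verts_of_mem_nodes {s t : NiceTree n} (h : s ∈ t.nodes) : s.bag ⊆ t.verts := by
  induction t with
  | leaf v =>
    rw [nodes, mem_singleton] at h
    exact h ▸ bag_subset_verts _
  | introduce v t ih =>
    rcases mem_insert.1 h with rfl | h
    · exact bag_subset_verts _
    · exact (ih h).trans (subset_insert v _)
  | forget v t ih =>
    rcases mem_insert.1 h with rfl | h
    · exact bag_subset_verts _
    · exact ih h
  | join t₁ t₂ ih₁ ih₂ =>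
    rcases mem_insert.1 h with rfl | h
    · exact bag_subset_verts _
    · rcases mem_union.1 h with h | h
      · exact (ih₁ h).trans subset_union_left
      · exact (ih₂ h).trans subset_union_right

theorem mem_nodes_of_mem_edges {e : NiceTree n × NiceTree n} {t : NiceTree n} (h : e ∈ t.edges) :
    e.1 ∈ t.nodes ∧ e.2 ∈ t.nodes := by
  induction t with
  | leaf v => simp [edges] at h
  | introduce v t ih =>
    rcases mem_insert.1 h with rfl | h
    · simp [nodes, self_mem_nodes]
    · simp [nodes, ih h]
  | forget v t ih =>
    rcases mem_insert.1 h with rfl | h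
    · simp [nodes, self_mem_nodes]
    · simp [nodes, ih h]
  | join t₁ t₂ ih₁ ih₂ =>
    simp only [edges, mem_insert, mem_union] at h
    rcases h with rfl | rfl | h | h
    · simp [nodes, self_mem_nodes]
    · simp [nodes, self_mem_nodes]
    · simp [nodes, ih₁ h]
    · simp [nodes, ih₂ h]

theorem card_nodes_le_size (t : NiceTree n) : t.nodes.card ≤ t.size := by
  induction t with
  | leaf v => simp [nodes, size]
  | introduce v t ih => exact (card_insert_le _ _).trans (by simpa [size] using ih)
  | forget v t ih => exact (card_insert_le _ _).trans (by simpa [size] using ih)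
  | join t₁ t₂ ih₁ ih₂ =>
    have := card_union_le t₁.nodes t₂.nodes
    have := card_insert_le (join t₁ t₂) (t₁.nodes ∪ t₂.nodes)
    simp only [nodes, size]
    omega

theorem card_edges_lt_size (t : NiceTree n) : t.edges.card < t.size := by
  induction t with
  | leaf v => simp [edges, size]
  | introduce v t ih => exact (card_insert_le _ _).trans_lt (by simpa [size] using ih)
  | forget v t ih => exact (card_insert_le _ _).trans_lt (by simpa [size] using ih)
  | join t₁ t₂ ih₁ ih₂ =>
    have := card_union_le t₁.edges t₂.edges
    have := card_insert_le (join t₁ t₂, t₂) (t₁.edges ∪ t₂.edges)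
    have := card_insert_le (join t₁ t₂, t₁) (insert (join t₁ t₂, t₂) (t₁.edges ∪ t₂.edges))
    simp only [edges, size]
    omega

theorem _root_.IsNiceTreeDecompGraph.exists_mem_nodes_forall_mem_bag {G : SimpleGraph (Fin n)}
    {T : NiceTree n} (h : IsNiceTreeDecompGraph G T) (e : G.edgeSet) :
    ∃ s ∈ T.nodes, ∀ u ∈ e.1, u ∈ s.bag := by
  obtain ⟨e, he⟩ := e
  induction e using Sym2.ind with
  | _ u v =>
    obtain ⟨s, hs, hu, hv⟩ := h.2.2 u v he
    refine ⟨s, mem_nodes_iff_isSubtree.2 hs, fun w hw => ?_⟩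
    rcases Sym2.mem_iff.1 hw with rfl | rfl
    exacts [hu, hv]

def LocallyConsistent (t : NiceTree n) (f : NiceTree n → Finset (Fin n) → ℝ) : Prop :=
  ∀ e ∈ t.edges, MarginalsAgree e.1.bag e.2.bag (f e.1) (f e.2)

def HasBagMarginals (t : NiceTree n) (w : Finset (Fin n) → ℝ)
    (f : NiceTree n → Finset (Fin n) → ℝ) : Prop :=
  (∀ S ⊆ t.verts, 0 ≤ w S) ∧ ∀ s ∈ t.nodes, ∀ K ⊆ s.bag, marginal t.verts s.bag w K = f s K

section Decomposition

variable {f : NiceTree n → Finset (Fin n) → ℝ}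

theorem hasBagMarginals_leaf {v : Fin n} (hf : ∀ K ⊆ {v}, 0 ≤ f (leaf v) K) :
    HasBagMarginals (leaf v) (f (leaf v)) f := by
  refine ⟨hf, fun s hs K hK => ?_⟩
  rw [nodes, mem_singleton] at hs
  subst hs
  exact marginal_self hK _

theorem hasBagMarginals_introduce {v : Fin n} {t : NiceTree n} {w : Finset (Fin n) → ℝ}
    (hv : v ∉ t.verts) (hw : HasBagMarginals t w f)
    (hf : ∀ K ⊆ insert v t.bag, 0 ≤ f (introduce v t) K)
    (he : MarginalsAgree (insert v t.bag) t.bag (f (introduce v t)) (f t)) :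
    HasBagMarginals (introduce v t) (glue t.verts (insert v t.bag) w (f (introduce v t))) f := by
  have hB : t.verts ∩ insert v t.bag = t.bag := by
    rw [inter_insert_of_notMem hv, inter_eq_right.2 (bag_subset_verts t)]
  have hagree : MarginalsAgree t.verts (insert v t.bag) w (f (introduce v t)) := by
    intro K hK
    rw [hB] at hK ⊢
    rw [hw.2 t (self_mem_nodes t) K hK, he.marginal_eq_of_subset (subset_insert v _) hK]
  have hverts : (introduce v t).verts = t.verts ∪ insert v t.bag := by
    rw [union_insert, union_eq_left.2 (bag_subset_verts t)]
    rfl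
  refine ⟨fun S _ => glue_nonneg hw.1 hf S, fun s hs K hK => ?_⟩
  rw [hverts]
  rcases mem_insert.1 hs with rfl | hs
  · exact (congrFun (marginal_glue_right hf hagree subset_rfl) K).trans (marginal_self hK _)
  · exact (congrFun (marginal_glue_left hw.1 hagree (bag_subset_verts_of_mem_nodes hs)) K).trans
      (hw.2 s hs K hK)

theorem hasBagMarginals_forget {v : Fin n} {t : NiceTree n} {w : Finset (Fin n) → ℝ}
    (hw : HasBagMarginals t w f)
    (he : MarginalsAgree (t.bag.erase v) t.bag (f (forget v t)) (f t)) :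
    HasBagMarginals (forget v t) w f := by
  refine ⟨hw.1, fun s hs K hK => ?_⟩
  rcases mem_insert.1 hs with rfl | hs
  · change marginal t.verts (t.bag.erase v) w K = f (forget v t) K
    rw [← marginal_marginal (erase_subset v t.bag), marginal_congr (hw.2 t (self_mem_nodes t))]
    exact he.symm.marginal_eq_of_subset (erase_subset v t.bag) hK
  · exact hw.2 s hs K hK

theorem hasBagMarginals_join {t₁ t₂ : NiceTree n} {w₁ w₂ : Finset (Fin n) → ℝ}
    (hbag : t₁.bag = t₂.bag) (hI : t₁.verts ∩ t₂.verts ⊆ t₁.bag)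
    (hw₁ : HasBagMarginals t₁ w₁ f) (hw₂ : HasBagMarginals t₂ w₂ f)
    (he₁ : MarginalsAgree t₁.bag t₁.bag (f (join t₁ t₂)) (f t₁))
    (he₂ : MarginalsAgree t₁.bag t₂.bag (f (join t₁ t₂)) (f t₂)) :
    HasBagMarginals (join t₁ t₂) (glue t₁.verts t₂.verts w₁ w₂) f := by
  rw [← hbag] at he₂
  have hjoin₁ : ∀ K ⊆ t₁.bag, f (join t₁ t₂) K = f t₁ K := fun K hK => by
    rw [← marginal_self hK (f (join t₁ t₂)), he₁.marginal_eq_of_subset subset_rfl hK]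
  have hjoin₂ : ∀ K ⊆ t₁.bag, f (join t₁ t₂) K = f t₂ K := fun K hK => by
    rw [← marginal_self hK (f (join t₁ t₂)), he₂.marginal_eq_of_subset subset_rfl hK]
  have hB : t₁.verts ∩ t₂.verts = t₁.bag :=
    subset_antisymm hI (subset_inter (bag_subset_verts t₁) (hbag ▸ bag_subset_verts t₂))
  have hagree : MarginalsAgree t₁.verts t₂.verts w₁ w₂ := by
    intro K hK
    rw [hB] at hK ⊢
    rw [hw₁.2 t₁ (self_mem_nodes t₁) K hK, hbag, hw₂.2 t₂ (self_mem_nodes t₂) K (hbag ▸ hK),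
      ← hjoin₁ K hK, hjoin₂ K hK]
  refine ⟨fun S _ => glue_nonneg hw₁.1 hw₂.1 S, fun s hs K hK => ?_⟩
  simp only [nodes, mem_insert, mem_union] at hs
  rcases hs with rfl | hs | hs
  · change marginal (t₁.verts ∪ t₂.verts) t₁.bag _ K = f (join t₁ t₂) K
    rw [marginal_glue_left hw₁.1 hagree (bag_subset_verts t₁), hw₁.2 t₁ (self_mem_nodes t₁) K hK,
      hjoin₁ K hK]
  · exact (congrFun (marginal_glue_left hw₁.1 hagree (bag_subset_verts_of_mem_nodes hs)) K).trans
      (hw₁.2 s hs K hK)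
  · exact (congrFun (marginal_glue_right hw₂.1 hagree (bag_subset_verts_of_mem_nodes hs)) K).trans
      (hw₂.2 s hs K hK)

theorem exists_hasBagMarginals {t : NiceTree n} (ht : t.valid)
    (hf : ∀ s ∈ t.nodes, ∀ K ⊆ s.bag, 0 ≤ f s K) (hc : t.LocallyConsistent f) :
    ∃ w, HasBagMarginals t w f := by
  induction t with
  | leaf v => exact ⟨_, hasBagMarginals_leaf (hf _ (self_mem_nodes _))⟩
  | introduce v t ih =>
    simp only [LocallyConsistent, edges, forall_mem_insert] at hc
    obtain ⟨w, hw⟩ := ih ht.2 (fun s hs => hf s (mem_insert_of_mem hs)) hc.2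
    exact ⟨_, hasBagMarginals_introduce ht.1 hw (hf _ (self_mem_nodes _)) hc.1⟩
  | forget v t ih =>
    simp only [LocallyConsistent, edges, forall_mem_insert] at hc
    obtain ⟨w, hw⟩ := ih ht.2 (fun s hs => hf s (mem_insert_of_mem hs)) hc.2
    exact ⟨_, hasBagMarginals_forget hw hc.1⟩
  | join t₁ t₂ ih₁ ih₂ =>
    simp only [LocallyConsistent, edges, forall_mem_insert, forall_mem_union] at hc
    obtain ⟨hbag, hI, ht₁, ht₂⟩ := ht
    obtain ⟨w₁, hw₁⟩ := ih₁ ht₁ (fun s hs => hf s (by simp [nodes, hs])) hc.2.2.1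
    obtain ⟨w₂, hw₂⟩ := ih₂ ht₂ (fun s hs => hf s (by simp [nodes, hs])) hc.2.2.2
    exact ⟨_, hasBagMarginals_join hbag hI hw₁ hw₂ hc.1 hc.2.1⟩

end Decomposition

def vars (T : NiceTree n) : Finset (Σ _ : NiceTree n, Finset (Fin n)) :=
  T.nodes.sigma fun s => s.bag.powerset

def edgeRows (T : NiceTree n) : Finset (Σ _ : NiceTree n × NiceTree n, Finset (Fin n)) :=
  T.edges.sigma fun e => (e.1.bag ∩ e.2.bag).powerset

variable {T : NiceTree n}

theorem mem_vars {s : NiceTree n} {K : Finset (Fin n)} :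
    (⟨s, K⟩ : Σ _ : NiceTree n, Finset (Fin n)) ∈ T.vars ↔ s ∈ T.nodes ∧ K ⊆ s.bag := by
  rw [vars, mem_sigma, mem_powerset]

theorem card_vars_le {k : ℕ} (hk : ∀ s ∈ T.nodes, s.bag.card ≤ k) :
    T.vars.card ≤ T.size * 2 ^ k :=
  (card_sigma_powerset_le _ _ hk).trans (Nat.mul_le_mul_right _ T.card_nodes_le_size)

theorem card_edgeRows_add_one_le {k : ℕ} (hk : ∀ s ∈ T.nodes, s.bag.card ≤ k) :
    T.edgeRows.card + 1 ≤ T.size * 2 ^ k := by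
  have hrows := card_sigma_powerset_le T.edges (fun e => e.1.bag ∩ e.2.bag) fun e he =>
    (card_le_card inter_subset_left).trans (hk e.1 (mem_nodes_of_mem_edges he).1)
  calc T.edgeRows.card + 1 ≤ T.edges.card * 2 ^ k + 2 ^ k :=
        Nat.add_le_add hrows Nat.one_le_two_pow
    _ = (T.edges.card + 1) * 2 ^ k := by ring
    _ ≤ T.size * 2 ^ k := Nat.mul_le_mul_right _ T.card_edges_lt_size

variable (T) in
noncomputable def bagWeights : (T.vars → ℝ) →ₗ[ℝ] NiceTree n → Finset (Fin n) → ℝ where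
  toFun x s K := if h : ⟨s, K⟩ ∈ T.vars then x ⟨_, h⟩ else 0
  map_add' x y := by
    funext s K
    by_cases h : ⟨s, K⟩ ∈ T.vars <;> simp [h]
  map_smul' c x := by
    funext s K
    by_cases h : ⟨s, K⟩ ∈ T.vars <;> simp [h]

theorem bagWeights_apply (x : T.vars → ℝ) (i : T.vars) : T.bagWeights x i.1.1 i.1.2 = x i :=
  dif_pos i.2

theorem bagWeights_nonneg {x : T.vars → ℝ} (hx : 0 ≤ x) (s : NiceTree n) (K : Finset (Fin n)) :
    0 ≤ T.bagWeights x s K := by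
  change 0 ≤ dite _ _ _
  split_ifs
  exacts [hx _, le_rfl]

noncomputable def marginalDefect (f : NiceTree n → Finset (Fin n) → ℝ) (e : NiceTree n × NiceTree n)
    (K : Finset (Fin n)) : ℝ :=
  marginal e.1.bag (e.1.bag ∩ e.2.bag) (f e.1) K - marginal e.2.bag (e.1.bag ∩ e.2.bag) (f e.2) K

variable (T) in
noncomputable def constraintMap : (T.vars → ℝ) →ₗ[ℝ] T.edgeRows ⊕ Unit → ℝ where
  toFun x := Sum.elim (fun r => marginalDefect (T.bagWeights x) r.1.1 r.1.2)
    fun _ => ∑ K ∈ T.bag.powerset, T.bagWeights x T K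
  map_add' x y := by
    funext r
    rcases r with r | _
    · simp only [Sum.elim_inl, marginalDefect, marginal, map_add, Pi.add_apply, sum_add_distrib]
      ring
    · simp [sum_add_distrib]
  map_smul' c x := by
    funext r
    rcases r with r | _ <;> simp [marginalDefect, marginal, mul_sum, mul_sub]

variable (T) in
def localPolytope : Set (T.vars → ℝ) :=
  {x | 0 ≤ x ∧ T.LocallyConsistent (T.bagWeights x) ∧ ∑ K ∈ T.bag.powerset, T.bagWeights x T K = 1}

theorem constraintMap_eq_iff {x : T.vars → ℝ} :
    T.constraintMap x = Sum.elim (0 : T.edgeRows → ℝ) 1 ↔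
      T.LocallyConsistent (T.bagWeights x) ∧ ∑ K ∈ T.bag.powerset, T.bagWeights x T K = 1 := by
  rw [funext_iff, Sum.forall]
  refine and_congr ⟨fun h e he K hK => ?_, fun h r => ?_⟩ ⟨fun h => h (), fun h _ => h⟩
  · exact sub_eq_zero.1 (h ⟨⟨e, K⟩, mem_sigma.2 ⟨he, mem_powerset.2 hK⟩⟩)
  · obtain ⟨he, hK⟩ := mem_sigma.1 r.2
    exact sub_eq_zero.2 (h _ he _ (mem_powerset.1 hK))

theorem localPolytope_eq :
    T.localPolytope =
      {x | (-LinearMap.id : (T.vars → ℝ) →ₗ[ℝ] T.vars → ℝ) x ≤ 0 ∧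
        T.constraintMap x = Sum.elim (0 : T.edgeRows → ℝ) 1} := by
  ext x
  rw [Set.mem_ofPred_eq, constraintMap_eq_iff, LinearMap.neg_apply, LinearMap.id_apply,
    neg_nonpos]
  rfl

theorem convex_localPolytope : Convex ℝ T.localPolytope := by
  rw [localPolytope_eq]
  exact ((convex_Iic (0 : T.vars → ℝ)).linear_preimage _).inter
    ((convex_singleton _).linear_preimage _)

variable (T) in
def cutPoint (S : Finset (Fin n)) : T.vars → ℝ :=
  fun i => if S ∩ i.1.1.bag = i.1.2 then 1 else 0

theorem bagWeights_cutPoint {s : NiceTree n} (hs : s ∈ T.nodes) (S : Finset (Fin n)) :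
    T.bagWeights (T.cutPoint S) s = fun K => if S ∩ s.bag = K then 1 else 0 := by
  funext K
  by_cases hK : K ⊆ s.bag
  · exact dif_pos (mem_vars.2 ⟨hs, hK⟩)
  · refine (dif_neg fun h => hK (mem_vars.1 h).2).trans (if_neg ?_).symm
    rintro rfl
    exact hK inter_subset_right

theorem cutPoint_mem_localPolytope (S : Finset (Fin n)) : T.cutPoint S ∈ T.localPolytope := by
  refine ⟨fun i => ?_, fun e he K _ => ?_, ?_⟩
  · change 0 ≤ ite _ _ _
    split_ifs <;> norm_num
  · obtain ⟨he₁, he₂⟩ := mem_nodes_of_mem_edges he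
    rw [bagWeights_cutPoint he₁, bagWeights_cutPoint he₂,
      marginal_indicator inter_subset_right, marginal_indicator inter_subset_right]
    congr 2
    grind
  · rw [bagWeights_cutPoint T.self_mem_nodes, sum_ite_eq,
      if_pos (mem_powerset.2 inter_subset_right)]

theorem mem_convexHull_of_mem_localPolytope (hT : T.valid) {x : T.vars → ℝ}
    (hx : x ∈ T.localPolytope) : x ∈ convexHull ℝ (Set.range T.cutPoint) := by
  obtain ⟨hx0, hc, hsum⟩ := hx
  obtain ⟨w, hw0, hw⟩ := exists_hasBagMarginals hT (fun s _ K _ => bagWeights_nonneg hx0 s K) hc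
  have hx : x = ∑ S ∈ T.verts.powerset, w S • T.cutPoint S := by
    funext i
    obtain ⟨hs, hK⟩ := mem_vars.1 i.2
    rw [← bagWeights_apply x i, ← hw _ hs _ hK, marginal, sum_filter, Finset.sum_apply]
    simp [cutPoint]
  have hw1 : ∑ S ∈ T.verts.powerset, w S = 1 := by
    rw [← sum_marginal T.verts T.bag w, ← hsum]
    exact sum_congr rfl fun K hK => hw T T.self_mem_nodes K (mem_powerset.1 hK)
  rw [hx]
  exact (convex_convexHull ℝ _).sum_mem (fun S hS => hw0 S (mem_powerset.1 hS)) hw1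
    fun S _ => subset_convexHull ℝ _ ⟨S, rfl⟩

theorem localPolytope_eq_convexHull (hT : T.valid) :
    T.localPolytope = convexHull ℝ (Set.range T.cutPoint) :=
  subset_antisymm (fun _ => mem_convexHull_of_mem_localPolytope hT)
    (convexHull_min (Set.range_subset_iff.2 cutPoint_mem_localPolytope) convex_localPolytope)

variable (T) in
noncomputable def cutProjection (G : SimpleGraph (Fin n)) (node : G.edgeSet → NiceTree n) :
    (T.vars → ℝ) →ₗ[ℝ] G.edgeSet → ℝ where
  toFun x e := ∑ K ∈ (node e).bag.powerset, cutIndicator K e.1 * T.bagWeights x (node e) K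
  map_add' x y := by
    funext e
    simp [mul_add, sum_add_distrib]
  map_smul' c x := by
    funext e
    simp [mul_sum, mul_left_comm]

theorem cutProjection_comp_cutPoint {G : SimpleGraph (Fin n)} {node : G.edgeSet → NiceTree n}
    (hnode : ∀ e, node e ∈ T.nodes) (hbag : ∀ e : G.edgeSet, ∀ u ∈ e.1, u ∈ (node e).bag) :
    T.cutProjection G node ∘ T.cutPoint = fun S e => cutIndicator S e.1 := by
  funext S e
  simp [cutProjection, bagWeights_cutPoint (hnode e), cutIndicator_inter (hbag e)]

end NiceTree

/-- Extended formulation of size `O(2^(τ+1)·N)` for the cut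
polytope of a graph of treewidth `τ`. -/
theorem cut_polytope_extended_formulation :
    ∃ c : ℕ, 0 < c ∧
      ∀ (n : ℕ) (G : SimpleGraph (Fin n)) (T : NiceTree n) (τ : ℕ),
        IsNiceTreeDecompGraph G T →
        (∀ s : NiceTree n, s.isSubtree T → s.bag.card ≤ τ + 1) →
        ∃ (m p q : ℕ) (A : Matrix (Fin p) (Fin m) ℝ) (bvec : Fin p → ℝ)
          (Cmat : Matrix (Fin q) (Fin m) ℝ) (dvec : Fin q → ℝ)
          (π : (Fin m → ℝ) →ₗ[ℝ] (↥G.edgeSet → ℝ)),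
          m ≤ c * 2 ^ (τ + 1) * T.size ∧ p + q ≤ c * 2 ^ (τ + 1) * T.size ∧
          π '' {x | A.mulVec x ≤ bvec ∧ Cmat.mulVec x = dvec}
            = convexHull ℝ {x : ↥G.edgeSet → ℝ | ∃ S : Finset (Fin n),
                ∀ (u v : Fin n) (h : G.Adj u v),
                  x ⟨s(u, v), (G.mem_edgeSet).mpr h⟩ =
                    if (u ∈ S ∧ v ∉ S) ∨ (v ∈ S ∧ u ∉ S) then (1 : ℝ) else 0} := by
  refine ⟨2, two_pos, ?_⟩
  intro n G T τ hdec hwidth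
  choose node hnode hbag using hdec.exists_mem_nodes_forall_mem_bag
  have hwidth' : ∀ s ∈ T.nodes, s.bag.card ≤ τ + 1 := fun s hs =>
    hwidth s (NiceTree.mem_nodes_iff_isSubtree.1 hs)
  obtain ⟨A, b, C, d, π, himage⟩ := exists_fin_polyhedron_image_eq (-LinearMap.id) 0
    T.constraintMap (Sum.elim 0 1) (T.cutProjection G node)
  have hvars := NiceTree.card_vars_le hwidth'
  have hrows := NiceTree.card_edgeRows_add_one_le hwidth'
  refine ⟨_, _, _, A, b, C, d, π, ?_, ?_, ?_⟩
  · rw [Fintype.card_coe]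
    nlinarith
  · rw [Fintype.card_sum, Fintype.card_coe, Fintype.card_coe, Fintype.card_unit]
    nlinarith
  · rw [himage, ← NiceTree.localPolytope_eq, NiceTree.localPolytope_eq_convexHull hdec.1,
      LinearMap.image_convexHull, ← Set.range_comp,
      NiceTree.cutProjection_comp_cutPoint hnode hbag, setOf_cut_eq_range]
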